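/- (Key Lemma) Let F : 𝔻 → Ω_n be holomorphic, let λ_1,…,λ_s be the distinct eigenvalues of F(0), and let m(j) be the multiplicity of (λ − λ_j) in the minimal polynomial of F(0). Define the Blaschke product B(ζ) = ∏_{j=1}^s ((ζ − λ_j)/(1 − conj(λ_j)ζ))^{m(j)}. Then for every ζ ∈ 𝔻 and every eigenvalue λ of F(ζ), one has |B(λ)| ≤ |ζ|. -/

import Mathlib

open Metric

/-- The spectral radius of a complex `n × n` matrix. -/
noncomputable def sRad {n : ℕ} (A : Matrix (Fin n) (Fin n) ℂ) : ℝ :=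
  sSup ((fun μ => ‖μ‖) '' spectrum ℂ A)

/-!
Let `q` be the minimal polynomial of `F 0` and `Q z = ∏ (1 - conj μ * z)` over its roots, so that
`B = q / Q`. Then `G z = q(F z) * Q(F z)⁻¹` is holomorphic on the disc, `G 0 = 0`, and the spectrum
of `G z` is `B '' σ(F z)`, which lies in the closed unit disc. A Schwarz lemma for spectra
concludes: writing `G z = z • K z`, the spectrum of `K w` lies in the disc of radius `1 / |w|`, so
by the maximum modulus principle the coefficients of the characteristic polynomial of `(K z) ^ m`
are bounded independently of `m`. Cauchy's root bound then gives `|ν| ^ m < 2 ^ n + 1` for every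
eigenvalue `ν` of `K z` and every `m`, whence `|ν| ≤ 1`.
-/

open Polynomial ComplexConjugate Filter Set Topology
open scoped Pointwise

theorem Complex.normSq_one_sub_conj_mul_sub_normSq_sub (μ α : ℂ) :
    normSq (1 - conj μ * α) - normSq (α - μ) = (1 - normSq μ) * (1 - normSq α) := by
  simp only [normSq_apply, sub_re, sub_im, mul_re, mul_im, conj_re, conj_im, one_re, one_im]
  ring

theorem Complex.norm_sub_le_norm_one_sub_conj_mul {μ α : ℂ} (hμ : ‖μ‖ ≤ 1) (hα : ‖α‖ ≤ 1) :
    ‖α - μ‖ ≤ ‖1 - conj μ * α‖ := by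
  have hμ' : normSq μ ≤ 1 := by rw [← Complex.sq_norm]; exact pow_le_one₀ (norm_nonneg _) hμ
  have hα' : normSq α ≤ 1 := by rw [← Complex.sq_norm]; exact pow_le_one₀ (norm_nonneg _) hα
  have := normSq_one_sub_conj_mul_sub_normSq_sub μ α
  rw [← sq_le_sq₀ (norm_nonneg _) (norm_nonneg _), Complex.sq_norm, Complex.sq_norm]
  nlinarith [mul_nonneg (sub_nonneg.2 hμ') (sub_nonneg.2 hα')]

theorem Complex.one_sub_conj_mul_ne_zero {μ α : ℂ} (hμ : ‖μ‖ < 1) (hα : ‖α‖ ≤ 1) :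
    1 - conj μ * α ≠ 0 := by
  have : ‖conj μ * α‖ < 1 := by
    rw [norm_mul, RCLike.norm_conj]
    exact mul_lt_one_of_nonneg_of_lt_one_left (norm_nonneg _) hμ hα
  rw [sub_ne_zero]
  rintro h
  simp [← h] at this

noncomputable def blaschke (Z : Multiset ℂ) (z : ℂ) : ℂ :=
  (Z.map fun μ => (z - μ) / (1 - conj μ * z)).prod

noncomputable def blaschkeDenom (Z : Multiset ℂ) : ℂ[X] :=
  (Z.map fun μ => 1 - C (conj μ) * X).prod

theorem norm_blaschke_le_one {Z : Multiset ℂ} (hZ : ∀ μ ∈ Z, ‖μ‖ ≤ 1) {z : ℂ} (hz : ‖z‖ ≤ 1) :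
    ‖blaschke Z z‖ ≤ 1 := by
  induction Z using Multiset.induction_on with
  | empty => simp [blaschke]
  | cons μ Z ih =>
    rw [blaschke, Multiset.map_cons, Multiset.prod_cons, norm_mul]
    refine mul_le_one₀ ?_ (norm_nonneg _) (ih fun ν hν => hZ ν (Multiset.mem_cons_of_mem hν))
    rw [norm_div]
    exact div_le_one_of_le₀ (Complex.norm_sub_le_norm_one_sub_conj_mul
      (hZ μ (Multiset.mem_cons_self μ Z)) hz) (norm_nonneg _)

theorem eval_blaschkeDenom_ne_zero {Z : Multiset ℂ} (hZ : ∀ μ ∈ Z, ‖μ‖ < 1) {z : ℂ}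
    (hz : ‖z‖ ≤ 1) : (blaschkeDenom Z).eval z ≠ 0 := by
  rw [blaschkeDenom, eval_multiset_prod, Multiset.map_map]
  refine Multiset.prod_ne_zero fun h => ?_
  obtain ⟨μ, hμ, h0⟩ := Multiset.mem_map.1 h
  exact Complex.one_sub_conj_mul_ne_zero (hZ μ hμ) hz (by simpa using h0)

theorem blaschke_roots_eq_eval_div {p : ℂ[X]} (hp : p.Monic) (z : ℂ) :
    blaschke p.roots z = p.eval z / (blaschkeDenom p.roots).eval z := by
  rw [blaschke, Multiset.prod_map_div, (IsAlgClosed.splits p).eval_eq_prod_roots_of_monic hp,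
    blaschkeDenom, eval_multiset_prod, Multiset.map_map]
  simp

section Spectrum

variable {𝕜 A : Type*} [Field 𝕜] [IsAlgClosed 𝕜] [Ring A] [Algebra 𝕜 A]

theorem spectrum.isUnit_aeval_of_forall_eval_ne_zero {a : A} (ha : (spectrum 𝕜 a).Nonempty)
    {Q : 𝕜[X]} (hQ : ∀ α ∈ spectrum 𝕜 a, Q.eval α ≠ 0) : IsUnit (aeval a Q) := by
  rw [← spectrum.zero_notMem_iff 𝕜, spectrum.map_polynomial_aeval_of_nonempty a Q ha]
  rintro ⟨α, hα, h0⟩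
  exact hQ α hα h0

theorem spectrum.aeval_mul_ringInverse_aeval {a : A} (ha : (spectrum 𝕜 a).Nonempty) {p Q : 𝕜[X]}
    (hQ : ∀ α ∈ spectrum 𝕜 a, Q.eval α ≠ 0) :
    spectrum 𝕜 (aeval a p * Ring.inverse (aeval a Q)) =
      (fun α => p.eval α / Q.eval α) '' spectrum 𝕜 a := by
  obtain ⟨u, hu⟩ := spectrum.isUnit_aeval_of_forall_eval_ne_zero ha hQ
  ext β
  have hshift : algebraMap 𝕜 A β - aeval a p * Ring.inverse (aeval a Q) =
      aeval a (C β * Q - p) * ↑u⁻¹ := by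
    rw [← hu, Ring.inverse_unit, map_sub, map_mul, aeval_C, ← hu, sub_mul, mul_assoc,
      Units.mul_inv, mul_one]
  rw [spectrum.mem_iff, hshift, Units.isUnit_mul_units, ← spectrum.zero_mem_iff 𝕜,
    spectrum.map_polynomial_aeval_of_nonempty a _ ha]
  refine exists_congr fun α => and_congr_right fun hα => ?_
  change eval α (C β * Q - p) = 0 ↔ eval α p / eval α Q = β
  rw [eval_sub, eval_mul, eval_C, sub_eq_zero, div_eq_iff (hQ α hα), eq_comm]

end Spectrum

theorem norm_le_of_forall_norm_le_div_norm_pow {E : Type*} [NormedAddCommGroup E]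
    [NormedSpace ℂ E] {f : ℂ → E} (hf : DifferentiableOn ℂ f (ball 0 1)) {C : ℝ} {k : ℕ}
    (hbound : ∀ w ∈ ball (0 : ℂ) 1, w ≠ 0 → ‖f w‖ ≤ C / ‖w‖ ^ k) :
    ∀ z ∈ ball (0 : ℂ) 1, ‖f z‖ ≤ C := by
  intro z hz
  rw [mem_ball_zero_iff] at hz
  have hρ : ∀ ρ ∈ Ioo ‖z‖ 1, ‖f z‖ ≤ C / ρ ^ k := by
    rintro ρ ⟨hzρ, hρ1⟩
    have hρ0 : ρ ≠ 0 := ((norm_nonneg z).trans_lt hzρ).ne'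
    refine Complex.norm_le_of_forall_mem_frontier_norm_le isBounded_ball
      (hf.mono ?_).diffContOnCl (fun w hw => ?_) (subset_closure (mem_ball_zero_iff.2 hzρ))
    · rw [closure_ball 0 hρ0]
      exact closedBall_subset_ball hρ1
    · rw [frontier_ball 0 hρ0, mem_sphere_zero_iff_norm] at hw
      rw [← hw]
      refine hbound w (mem_ball_zero_iff.2 (hw ▸ hρ1)) ?_
      rintro rfl
      exact hρ0 (by simpa using hw.symm)
  have hlim : Tendsto (fun ρ : ℝ => C / ρ ^ k) (𝓝[<] 1) (𝓝 C) := by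
    have : ContinuousAt (fun ρ : ℝ => C / ρ ^ k) 1 := by fun_prop (disch := norm_num)
    simpa using this.tendsto.mono_left nhdsWithin_le_nhds
  exact ge_of_tendsto hlim (eventually_of_mem (Ioo_mem_nhdsLT hz) hρ)

theorem Polynomial.Monic.mahlerMeasure_le_pow {p : ℂ[X]} (hp : p.Monic) {R : ℝ} (hR : 1 ≤ R)
    (h : ∀ a ∈ p.roots, ‖a‖ ≤ R) : p.mahlerMeasure ≤ R ^ p.natDegree := by
  rw [mahlerMeasure_eq_leadingCoeff_mul_prod_roots, hp.leadingCoeff, norm_one, one_mul]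
  calc (p.roots.map fun a => max 1 ‖a‖).prod ≤ (p.roots.map fun _ => R).prod :=
        Multiset.prod_map_le_prod_map₀ _ _ (fun _ _ => zero_le_one.trans (le_max_left _ _))
          fun a ha => max_le hR (h a ha)
    _ ≤ R ^ p.natDegree := by
        rw [Multiset.map_const', Multiset.prod_replicate]
        exact pow_le_pow_right₀ hR p.card_roots'

theorem Polynomial.Monic.norm_lt_of_isRoot {K : Type*} [NormedDivisionRing K] {p : K[X]}
    (hp : p.Monic) {C : ℝ} (hC0 : 0 ≤ C) (hC : ∀ j < p.natDegree, ‖p.coeff j‖ ≤ C) {a : K}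
    (ha : p.IsRoot a) : ‖a‖ < C + 1 := by
  have hbound : p.cauchyBound ≤ C.toNNReal + 1 := by
    rw [cauchyBound, hp.leadingCoeff, nnnorm_one, div_one, add_le_add_iff_right]
    exact Finset.sup_le fun j hj => by
      rw [← NNReal.coe_le_coe, coe_nnnorm]
      exact (hC j (Finset.mem_range.1 hj)).trans (Real.le_coe_toNNReal C)
  have := (ha.norm_lt_cauchyBound hp.ne_zero).trans_le hbound
  rwa [← NNReal.coe_lt_coe, coe_nnnorm, NNReal.coe_add, Real.coe_toNNReal C hC0,
    NNReal.coe_one] at this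

theorem Matrix.norm_charpoly_coeff_le {n : Type*} [Fintype n] [DecidableEq n]
    (A : Matrix n n ℂ) {R : ℝ} (hR : 1 ≤ R) (hA : spectrum ℂ A ⊆ closedBall 0 R) (k : ℕ) :
    ‖A.charpoly.coeff k‖ ≤ (Fintype.card n).choose k * R ^ Fintype.card n := by
  have hroots : ∀ a ∈ A.charpoly.roots, ‖a‖ ≤ R := fun a ha => mem_closedBall_zero_iff.1 <|
    hA (Matrix.mem_spectrum_iff_isRoot_charpoly.2 (isRoot_of_mem_roots ha))
  have := norm_coeff_le_choose_mul_mahlerMeasure k A.charpoly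
  rw [A.charpoly_natDegree_eq_dim] at this
  refine this.trans (mul_le_mul_of_nonneg_left ?_ (Nat.cast_nonneg _))
  simpa [A.charpoly_natDegree_eq_dim] using A.charpoly_monic.mahlerMeasure_le_pow hR hroots

section MatrixFunctions

-- Any algebra norm would do: it only serves to differentiate matrix-valued functions.
attribute [local instance] Matrix.linftyOpNormedAddCommGroup Matrix.linftyOpNormedSpace
  Matrix.linftyOpNormedRing Matrix.linftyOpNormedAlgebra

variable {n : Type*} [Fintype n] [DecidableEq n]

theorem Matrix.differentiableOn_iff_forall_entry {F : ℂ → Matrix n n ℂ} {U : Set ℂ} :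
    DifferentiableOn ℂ F U ↔ ∀ i j, DifferentiableOn ℂ (fun z => F z i j) U := by
  refine ⟨fun hF i j => ?_, fun hF => ?_⟩
  · exact (LinearMap.toContinuousLinearMap (Matrix.entryLinearMap ℂ ℂ i j)).differentiable
      |>.comp_differentiableOn hF
  · have : F = fun z => ∑ i, ∑ j, F z i j • Matrix.single i j (1 : ℂ) := by
      ext1 z; simpa [Matrix.smul_single] using Matrix.matrix_eq_sum_single (F z)
    rw [this]
    exact DifferentiableOn.fun_sum fun i _ => DifferentiableOn.fun_sum fun j _ =>
      (hF i j).smul_const _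

theorem Matrix.differentiable_charpoly_coeff (k : ℕ) :
    Differentiable ℂ fun A : Matrix n n ℂ => A.charpoly.coeff k := by
  have h : ∀ A : Matrix n n ℂ, A.charpoly.coeff k =
      MvPolynomial.eval (fun ij : n × n => Matrix.entryLinearMap ℂ ℂ ij.1 ij.2 A)
        ((Matrix.charpoly.univ ℂ n).coeff k) := fun A => by
    show _ = MvPolynomial.eval₂Hom (RingHom.id ℂ) _ _
    rw [Matrix.charpoly.univ_coeff_eval₂Hom]
    rfl
  simp_rw [h]
  rw [← differentiableOn_univ]
  exact (AnalyticOnNhd.eval_continuousLinearMap' (fun ij : n × n =>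
    LinearMap.toContinuousLinearMap (Matrix.entryLinearMap ℂ ℂ ij.1 ij.2)) _).differentiableOn

section NonemptyIndex

variable [Nonempty n] {K : ℂ → Matrix n n ℂ}

theorem Matrix.norm_charpoly_pow_coeff_le_choose (hK : DifferentiableOn ℂ K (ball 0 1))
    (hσK : ∀ w ∈ ball (0 : ℂ) 1, w ≠ 0 → spectrum ℂ (K w) ⊆ closedBall 0 ‖w‖⁻¹) (m k : ℕ) :
    ∀ z ∈ ball (0 : ℂ) 1, ‖(K z ^ m).charpoly.coeff k‖ ≤ (Fintype.card n).choose k := by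
  refine norm_le_of_forall_norm_le_div_norm_pow (k := m * Fintype.card n)
    ((Matrix.differentiable_charpoly_coeff k).comp_differentiableOn (hK.pow m)) ?_
  intro w hw hw0
  have hw1 : 1 ≤ ‖w‖⁻¹ := one_le_inv₀ (norm_pos_iff.2 hw0) |>.2 (mem_ball_zero_iff.1 hw).le
  have hσKm : spectrum ℂ (K w ^ m) ⊆ closedBall 0 (‖w‖⁻¹ ^ m) := by
    rw [spectrum.map_pow_of_nonempty (spectrum.nonempty_of_isAlgClosed_of_finiteDimensional ℂ _)]
    rintro _ ⟨ν, hν, rfl⟩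
    rw [mem_closedBall_zero_iff, norm_pow]
    exact pow_le_pow_left₀ (norm_nonneg _) (mem_closedBall_zero_iff.1 (hσK w hw hw0 hν)) m
  calc ‖(K w ^ m).charpoly.coeff k‖
      ≤ (Fintype.card n).choose k * (‖w‖⁻¹ ^ m) ^ Fintype.card n :=
        Matrix.norm_charpoly_coeff_le _ (one_le_pow₀ hw1) hσKm k
    _ = (Fintype.card n).choose k / ‖w‖ ^ (m * Fintype.card n) := by
        rw [inv_pow, inv_pow, ← pow_mul, div_eq_mul_inv]

theorem Matrix.spectrum_subset_closedBall_one_of_inv_norm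
    (hK : DifferentiableOn ℂ K (ball 0 1))
    (hσK : ∀ w ∈ ball (0 : ℂ) 1, w ≠ 0 → spectrum ℂ (K w) ⊆ closedBall 0 ‖w‖⁻¹) :
    ∀ z ∈ ball (0 : ℂ) 1, spectrum ℂ (K z) ⊆ closedBall 0 1 := by
  intro z hz ν hν
  have hpow : ∀ m : ℕ, ‖ν‖ ^ m < 2 ^ Fintype.card n + 1 := by
    intro m
    rw [← norm_pow]
    refine (K z ^ m).charpoly_monic.norm_lt_of_isRoot (by positivity) (fun j _ => ?_)
      (Matrix.mem_spectrum_iff_isRoot_charpoly.1 (spectrum.pow_mem_pow _ m hν))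
    exact (Matrix.norm_charpoly_pow_coeff_le_choose hK hσK m j z hz).trans
      (mod_cast Nat.choose_le_two_pow _ _)
  rw [mem_closedBall_zero_iff]
  by_contra! h1
  obtain ⟨m, hm⟩ := pow_unbounded_of_one_lt (2 ^ Fintype.card n + 1 : ℝ) h1
  exact (hpow m).not_gt hm

theorem Matrix.spectrum_subset_closedBall_norm_of_map_zero {G : ℂ → Matrix n n ℂ}
    (hG : DifferentiableOn ℂ G (ball 0 1)) (hG0 : G 0 = 0)
    (hσG : ∀ z ∈ ball (0 : ℂ) 1, spectrum ℂ (G z) ⊆ closedBall 0 1) :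
    ∀ z ∈ ball (0 : ℂ) 1, spectrum ℂ (G z) ⊆ closedBall 0 ‖z‖ := by
  have hK : DifferentiableOn ℂ (dslope G 0) (ball 0 1) :=
    (Complex.differentiableOn_dslope (ball_mem_nhds 0 one_pos)).2 hG
  have hσ : ∀ z, spectrum ℂ (G z) = z • spectrum ℂ (dslope G 0 z) := fun z => by
    rw [← spectrum.smul_eq_smul _ _ (spectrum.nonempty_of_isAlgClosed_of_finiteDimensional ℂ _)]
    simpa [hG0] using congr_arg (spectrum ℂ) (sub_smul_dslope G 0 z).symm
  have hσK := Matrix.spectrum_subset_closedBall_one_of_inv_norm hK fun w hw hw0 ν hν => by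
    have := mem_closedBall_zero_iff.1 (hσG w hw (hσ w ▸ Set.smul_mem_smul_set hν))
    rw [norm_smul] at this
    rwa [mem_closedBall_zero_iff, ← one_div, le_div_iff₀' (norm_pos_iff.2 hw0)]
  intro z hz
  rw [hσ z]
  rintro _ ⟨ν, hν, rfl⟩
  rw [mem_closedBall_zero_iff, norm_smul]
  exact mul_le_of_le_one_right (norm_nonneg z) (mem_closedBall_zero_iff.1 (hσK z hz hν))

end NonemptyIndex

theorem Matrix.norm_eval_div_eval_le_norm {F : ℂ → Matrix n n ℂ}
    (hF : ∀ i j, DifferentiableOn ℂ (fun z => F z i j) (ball 0 1)) {p Q : ℂ[X]}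
    (hp : aeval (F 0) p = 0) (hQ : ∀ z ∈ ball (0 : ℂ) 1, ∀ α ∈ spectrum ℂ (F z), Q.eval α ≠ 0)
    (hpQ : ∀ z ∈ ball (0 : ℂ) 1, ∀ α ∈ spectrum ℂ (F z), ‖p.eval α / Q.eval α‖ ≤ 1) :
    ∀ z ∈ ball (0 : ℂ) 1, ∀ α ∈ spectrum ℂ (F z), ‖p.eval α / Q.eval α‖ ≤ ‖z‖ := by
  rcases isEmpty_or_nonempty n with hn | hn
  · simp [spectrum.of_subsingleton]
  have hσF (z : ℂ) := spectrum.nonempty_of_isAlgClosed_of_finiteDimensional ℂ (F z)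
  set G := fun z => aeval (F z) p * Ring.inverse (aeval (F z) Q)
  have hσG : ∀ z ∈ ball (0 : ℂ) 1,
      spectrum ℂ (G z) = (fun α => p.eval α / Q.eval α) '' spectrum ℂ (F z) :=
    fun z hz => spectrum.aeval_mul_ringInverse_aeval (hσF z) (hQ z hz)
  have hFa := (Matrix.differentiableOn_iff_forall_entry.2 hF).analyticOnNhd isOpen_ball
  have hG : DifferentiableOn ℂ G (ball 0 1) :=
    (hFa.aeval_polynomial p).differentiableOn.mul <|
      (hFa.aeval_polynomial Q).differentiableOn.inverse fun z hz =>
        spectrum.isUnit_aeval_of_forall_eval_ne_zero (hσF z) (hQ z hz)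
  have hG0 : G 0 = 0 := by simp [G, hp]
  intro z hz α hα
  refine mem_closedBall_zero_iff.1 <| Matrix.spectrum_subset_closedBall_norm_of_map_zero hG hG0
    (fun w hw => ?_) z hz (hσG z hz ▸ mem_image_of_mem _ hα)
  rw [hσG w hw]
  rintro _ ⟨β, hβ, rfl⟩
  exact mem_closedBall_zero_iff.2 (hpQ w hw β hβ)

end MatrixFunctions

theorem norm_le_sRad {n : ℕ} {A : Matrix (Fin n) (Fin n) ℂ} {μ : ℂ} (hμ : μ ∈ spectrum ℂ A) :
    ‖μ‖ ≤ sRad A :=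
  le_csSup ((A.finite_spectrum.image _).bddAbove) ⟨μ, hμ, rfl⟩

/-- (Key Lemma) Let `F : 𝔻 → Ω_n` be holomorphic, and let `B` be the Blaschke product
whose zeros are the roots of the minimal polynomial of `F(0)` counted with their
multiplicities in the minimal polynomial. Then `|B(λ)| ≤ |ζ|` for every `ζ ∈ 𝔻` and
every eigenvalue `λ` of `F(ζ)`. -/
theorem stmt9 {n : ℕ} (F : ℂ → Matrix (Fin n) (Fin n) ℂ)
    (hol : ∀ i j : Fin n, DifferentiableOn ℂ (fun ζ => F ζ i j) (ball (0 : ℂ) 1))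
    (hmap : ∀ ζ ∈ ball (0 : ℂ) 1, sRad (F ζ) < 1)
    (B : ℂ → ℂ)
    (hB : ∀ ζ : ℂ, B ζ =
      (((minpoly ℂ (F 0)).roots).map fun μ => (ζ - μ) / (1 - (starRingEnd ℂ μ) * ζ)).prod) :
    ∀ ζ ∈ ball (0 : ℂ) 1, ∀ lam ∈ spectrum ℂ (F ζ), ‖B lam‖ ≤ ‖ζ‖ := by
  set q := minpoly ℂ (F 0)
  have hq : q.Monic := minpoly.monic (Algebra.IsIntegral.isIntegral _)
  have hσ : ∀ z ∈ ball (0 : ℂ) 1, ∀ α ∈ spectrum ℂ (F z), ‖α‖ < 1 :=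
    fun z hz α hα => (norm_le_sRad hα).trans_lt (hmap z hz)
  have hroots : ∀ μ ∈ q.roots, ‖μ‖ < 1 := fun μ hμ =>
    hσ 0 (mem_ball_self one_pos) μ <| Matrix.mem_spectrum_iff_isRoot_charpoly.2 <|
      (isRoot_of_mem_roots hμ).dvd (Matrix.minpoly_dvd_charpoly _)
  have hBq : ∀ z, B z = q.eval z / (blaschkeDenom q.roots).eval z :=
    fun z => (hB z).trans (blaschke_roots_eq_eval_div hq z)
  simp only [hBq]
  refine Matrix.norm_eval_div_eval_le_norm hol (minpoly.aeval ℂ (F 0))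
    (fun z hz α hα => eval_blaschkeDenom_ne_zero hroots (hσ z hz α hα).le) fun z hz α hα => ?_
  rw [← blaschke_roots_eq_eval_div hq]
  exact norm_blaschke_le_one (fun μ hμ => (hroots μ hμ).le) (hσ z hz α hα).le
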